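/- Let f(x,w) = (1/(2πσ²√(1-ρ²)))·exp(-(x² + w² - 2ρxw)/(2σ²(1-ρ²))) be the bivariate Gaussian density with σ > 0 and |ρ| < 1, and let k(x,w) = |x-w| / (Δ²(1 + (x+w)²/(4Δ²))^{3/2}) for Δ > 0. Then ∫∫_{ℝ²} k(x,w) f(x,w) dx dw = (4/(πΔ))·√((1-ρ)/(1+ρ)) · ∫₀^∞ (1+η²)^{-3/2} · exp(-(Δ²/(σ²(1+ρ)))·η²) dη. -/

import Mathlib

/-!
In the coordinates `u = x - w`, `v = x + w` (Jacobian `1/2`) the quadratic form of the density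
diagonalises, `(x² + w² - 2ρxw) / (2σ²(1-ρ²)) = u² / (4σ²(1-ρ)) + v² / (4σ²(1+ρ))`, and the
curvature depends on `|u|` and `v` separately, so the double integral factors into
`∫ |u| e^{-a u²} du = 1/a` and an even integral in `v`, which the substitution `v = 2Δη`
turns into the integral over `η > 0`.
-/

open Real MeasureTheory Set Filter Convolution

lemma integral_Ioi_mul_exp_neg_mul_sq {b : ℝ} (hb : 0 < b) :
    ∫ r in Ioi (0 : ℝ), r * exp (-b * r ^ 2) = (2 * b)⁻¹ := by
  have h := integral_mul_cexp_neg_mul_sq (b := (b : ℂ)) (by simpa using hb)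
  rw [← Complex.ofReal_inj, ← integral_complex_ofReal]
  push_cast
  exact h

lemma integrable_abs_mul_exp_neg_mul_sq {b : ℝ} (hb : 0 < b) :
    Integrable fun u => |u| * exp (-b * u ^ 2) := by
  simpa only [abs_mul, abs_of_pos (exp_pos _)] using (integrable_mul_exp_neg_mul_sq hb).abs

lemma integral_abs_mul_exp_neg_mul_sq {b : ℝ} (hb : 0 < b) :
    ∫ u, |u| * exp (-b * u ^ 2) = b⁻¹ := by
  have h := integral_comp_abs (f := fun r => r * exp (-b * r ^ 2))
  simp only [sq_abs] at h
  rw [h, integral_Ioi_mul_exp_neg_mul_sq hb]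
  field_simp

lemma integral_eq_two_mul_integral_Ioi_comp_mul {g : ℝ → ℝ} (hg : ∀ v, g (-v) = g v)
    {c : ℝ} (hc : 0 < c) : ∫ v, g v = 2 * c * ∫ η in Ioi 0, g (c * η) := by
  have h_abs : ∀ v, g |v| = g v := fun v => by
    rcases abs_choice v with h | h <;> rw [h]; exact hg v
  rw [integral_comp_mul_left_Ioi g 0 hc, mul_zero, smul_eq_mul, ← mul_assoc,
    mul_assoc 2, mul_inv_cancel₀ hc.ne', mul_one, ← integral_comp_abs]
  simp only [h_abs]

lemma integrable_one_add_div_sq_rpow_neg_mul_exp_neg_mul_sq {b s : ℝ} (hb : 0 < b)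
    (hs : 0 ≤ s) (c : ℝ) :
    Integrable fun v => (1 + (v / c) ^ 2) ^ (-s) * exp (-b * v ^ 2) := by
  have h_cont : Continuous fun v : ℝ => (1 + (v / c) ^ 2) ^ (-s) :=
    (by fun_prop : Continuous fun v : ℝ => 1 + (v / c) ^ 2).rpow_const
      fun v => Or.inl (by positivity)
  refine (integrable_exp_neg_mul_sq hb).bdd_mul (c := 1) h_cont.aestronglyMeasurable
    (.of_forall fun v => ?_)
  have h1 : 1 ≤ 1 + (v / c) ^ 2 := le_add_of_nonneg_right (sq_nonneg _)
  rw [norm_of_nonneg (by positivity)]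
  exact rpow_le_one_of_one_le_of_nonpos h1 (neg_nonpos.mpr hs)

/-- The change of variables `(u, v) = (x - w, x + w)`: the inner integral is the convolution
`A ⋆ B` at `2 x`. -/
lemma integral_integral_mul_sub_mul_add {A B : ℝ → ℝ} (hA : Integrable A) (hB : Integrable B) :
    ∫ x, ∫ w, A (x - w) * B (x + w) = (∫ u, A u) * (∫ v, B v) / 2 := by
  have h_conv : ∀ x, ∫ w, A (x - w) * B (x + w) =
      (A ⋆[ContinuousLinearMap.mul ℝ ℝ] B) (2 * x) := by
    intro x
    rw [convolution_def, ← integral_add_left_eq_self _ x, ← integral_neg_eq_self]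
    congr 1 with w
    simp only [ContinuousLinearMap.mul_apply']
    ring_nf
  simp_rw [h_conv]
  rw [Measure.integral_comp_mul_left (fun y => (A ⋆[ContinuousLinearMap.mul ℝ ℝ] B) y) 2,
    integral_convolution (L := ContinuousLinearMap.mul ℝ ℝ) hA hB]
  simp only [ContinuousLinearMap.mul_apply', smul_eq_mul, abs_of_pos (by norm_num : (0:ℝ) < 2⁻¹)]
  ring

lemma quadratic_form_div_eq_sub_sq_add_add_sq {σ ρ : ℝ} (hσ : σ ≠ 0) (h1m : 1 - ρ ≠ 0)
    (h1p : 1 + ρ ≠ 0) (x w : ℝ) :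
    -(x ^ 2 + w ^ 2 - 2 * ρ * x * w) / (2 * σ ^ 2 * (1 - ρ ^ 2)) =
      -(1 / (4 * σ ^ 2 * (1 - ρ))) * (x - w) ^ 2 + -(1 / (4 * σ ^ 2 * (1 + ρ))) * (x + w) ^ 2 := by
  rw [show 1 - ρ ^ 2 = (1 - ρ) * (1 + ρ) by ring]
  field_simp
  ring

lemma sqrt_div_eq_div_sqrt_one_sub_sq {ρ : ℝ} (h : 0 ≤ 1 - ρ) :
    √((1 - ρ) / (1 + ρ)) = (1 - ρ) / √(1 - ρ ^ 2) := by
  rw [show 1 - ρ ^ 2 = (1 - ρ) * (1 + ρ) by ring, sqrt_mul h, div_mul_eq_div_div, div_sqrt,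
    sqrt_div h]

theorem stmt_3 (σ ρ Δ : ℝ) (hσ : 0 < σ) (hρ1 : -1 < ρ) (hρ2 : ρ < 1) (hΔ : 0 < Δ)
    (f : ℝ → ℝ → ℝ)
    (hf : ∀ x w, f x w = (1 / (2 * π * σ^2 * Real.sqrt (1 - ρ^2))) *
      Real.exp (-(x^2 + w^2 - 2 * ρ * x * w) / (2 * σ^2 * (1 - ρ^2))))
    (k : ℝ → ℝ → ℝ)
    (hk : ∀ x w, k x w = |x - w| / (Δ^2 * (1 + (x + w)^2 / (4 * Δ^2)) ^ (3/2 : ℝ))) :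
    ∫ x : ℝ, ∫ w : ℝ, k x w * f x w =
      (4 / (π * Δ)) * Real.sqrt ((1 - ρ) / (1 + ρ)) *
        ∫ η in Set.Ioi (0:ℝ),
          (1 + η^2) ^ (-(3/2) : ℝ) * Real.exp (-(Δ^2 / (σ^2 * (1 + ρ))) * η^2) := by
  have h1m : 0 < 1 - ρ := by linarith
  have h1p : 0 < 1 + ρ := by linarith
  set a := 1 / (4 * σ ^ 2 * (1 - ρ))
  set b := 1 / (4 * σ ^ 2 * (1 + ρ))
  set B : ℝ → ℝ := fun v => (1 + (v / (2 * Δ)) ^ 2) ^ (-(3 / 2) : ℝ) * exp (-b * v ^ 2)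
  have h_factor : ∀ x w, k x w * f x w = 1 / (2 * π * σ ^ 2 * √(1 - ρ ^ 2) * Δ ^ 2) *
      (|x - w| * exp (-a * (x - w) ^ 2) * B (x + w)) := by
    intro x w
    have h_base : 0 < 1 + ((x + w) / (2 * Δ)) ^ 2 := by positivity
    rw [hk, hf, quadratic_form_div_eq_sub_sq_add_add_sq hσ.ne' h1m.ne' h1p.ne', exp_add,
      show (x + w) ^ 2 / (4 * Δ ^ 2) = ((x + w) / (2 * Δ)) ^ 2 by ring]
    simp only [a, B, b, rpow_neg h_base.le]
    field_simp
  have h_scaled : ∀ η, B (2 * Δ * η) =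
      (1 + η ^ 2) ^ (-(3 / 2) : ℝ) * exp (-(Δ ^ 2 / (σ ^ 2 * (1 + ρ))) * η ^ 2) := by
    intro η
    simp only [B, b, mul_div_cancel_left₀ η (by positivity : 2 * Δ ≠ 0)]
    congr 2
    field_simp
    ring
  simp_rw [h_factor, integral_const_mul]
  rw [integral_integral_mul_sub_mul_add (integrable_abs_mul_exp_neg_mul_sq (by positivity))
    (integrable_one_add_div_sq_rpow_neg_mul_exp_neg_mul_sq (by positivity) (by norm_num) _),
    integral_abs_mul_exp_neg_mul_sq (by positivity),
    integral_eq_two_mul_integral_Ioi_comp_mul (g := B)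
      (fun v => by simp only [B, neg_div, neg_sq]) (by positivity : 0 < 2 * Δ)]
  simp_rw [h_scaled]
  generalize ∫ η in Ioi (0 : ℝ), (1 + η ^ 2) ^ (-(3 / 2) : ℝ) *
    exp (-(Δ ^ 2 / (σ ^ 2 * (1 + ρ))) * η ^ 2) = I
  rw [sqrt_div_eq_div_sqrt_one_sub_sq h1m.le]
  simp only [a]
  field_simp
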